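/- Let {H_n} be a Positive Linear Recurrence Sequence with length L and size S. Let n > 2L and 0 ≤ t < S. Let S_t = {ω ∈ Ω_n : Z_n(ω) = t}, and let h_t(ω) denote the legal decomposition obtained from ω by removing its second-to-last block and shifting all indices to the left of that block down by ℓ(t). Then for every ω ∈ S_t, h_t(ω) is a legal decomposition lying in Ω_{n−ℓ(t)}, and h_t is a bijection between S_t and Ω_{n−ℓ(t)}. -/

import Mathlib

open scoped BigOperators
open Filter

/-- A Positive Linear Recurrence Sequence (PLRS): a sequence `H` of positive integers
satisfying `H (n+1) = c 1 * H n + ⋯ + c L * H (n+1-L)` for `n ≥ L`, with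
`H 1 = 1` and initial conditions `H (n+1) = c 1 * H n + ⋯ + c n * H 1 + 1` for `1 ≤ n < L`. -/
structure PLRS where
  /-- the length of the recurrence -/
  L : ℕ
  /-- the coefficients of the recurrence (indexed from 1) -/
  c : ℕ → ℕ
  /-- the sequence itself (indexed from 1) -/
  H : ℕ → ℕ
  L_pos : 0 < L
  c1_pos : 0 < c 1
  cL_pos : 0 < c L
  H_pos : ∀ n, 1 ≤ n → 0 < H n
  H_one : H 1 = 1
  H_rec : ∀ n, L ≤ n → H (n + 1) = ∑ i ∈ Finset.Icc 1 L, c i * H (n + 1 - i)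
  H_init : ∀ n, 1 ≤ n → n < L → H (n + 1) = (∑ i ∈ Finset.Icc 1 n, c i * H (n + 1 - i)) + 1

namespace PLRS

/-- The size `S = c 1 + ⋯ + c L` of a PLRS. -/
def size (P : PLRS) : ℕ := ∑ i ∈ Finset.Icc 1 P.L, P.c i

/-- Legality of a coefficient sequence `(a_1, …, a_m)` (as a list), not including the
requirement `a_1 > 0`: either (Condition 1) `m < L` and `a_i = c_i` for all `i`, or
(Condition 2) there is `s ∈ {1, …, L}` with `a_1 = c_1, …, a_{s-1} = c_{s-1}`, `a_s < c_s`,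
and `(a_{s+1}, …, a_m)` legal (possibly empty). -/
inductive IsLegal (P : PLRS) : List ℕ → Prop
  | cond1 (m : ℕ) (h1 : 1 ≤ m) (h2 : m < P.L) :
      IsLegal P ((List.range m).map fun i => P.c (i + 1))
  | cond2 (s : ℕ) (hs1 : 1 ≤ s) (hs2 : s ≤ P.L) (a : ℕ) (ha : a < P.c s)
      (rest : List ℕ) (hrest : IsLegal P rest) :
      IsLegal P (((List.range (s - 1)).map fun i => P.c (i + 1)) ++ a :: rest)
  | cond2_last (s : ℕ) (hs1 : 1 ≤ s) (hs2 : s ≤ P.L) (a : ℕ) (ha : a < P.c s) :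
      IsLegal P (((List.range (s - 1)).map fun i => P.c (i + 1)) ++ [a])

/-- A legal decomposition: a legal coefficient sequence with `a_1 > 0`. -/
def LegalDecomp (P : PLRS) (l : List ℕ) : Prop := P.IsLegal l ∧ 0 < l.headI

/-- The value `∑_{i=1}^m a_i H_{m+1-i}` of a coefficient sequence `(a_1, …, a_m)`. -/
def value (P : PLRS) (l : List ℕ) : ℕ :=
  ∑ i ∈ Finset.range l.length, l.getD i 0 * P.H (l.length - i)

/-- `Ω_n`: the set of legal decompositions of integers in `[H_n, H_{n+1})`. -/
def Omega (P : PLRS) (n : ℕ) : Set (List ℕ) :=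
  {l | P.LegalDecomp l ∧ P.H n ≤ P.value l ∧ P.value l < P.H (n + 1)}

/-- Expectation of `g` under the uniform probability measure on a (finite) set `A`. -/
noncomputable def expectOn (A : Set (List ℕ)) (g : List ℕ → ℝ) : ℝ :=
  (∑ᶠ l ∈ A, g l) / (A.ncard : ℝ)

/-- Variance of `g` under the uniform probability measure on a (finite) set `A`. -/
noncomputable def varOn (A : Set (List ℕ)) (g : List ℕ → ℝ) : ℝ :=
  expectOn A (fun l => g l ^ 2) - (expectOn A g) ^ 2

/-- Expectation of `g` under the uniform probability measure on `Ω_n`. -/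
noncomputable def expect (P : PLRS) (n : ℕ) (g : List ℕ → ℝ) : ℝ := expectOn (P.Omega n) g

/-- Probability of the event `A` under the uniform probability measure on `Ω_n`. -/
noncomputable def prob (P : PLRS) (n : ℕ) (A : Set (List ℕ)) : ℝ :=
  ((P.Omega n ∩ A).ncard : ℝ) / ((P.Omega n).ncard : ℝ)

/-- `E[K_n]`, the expected number of summands on `Ω_n`. -/
noncomputable def expectK (P : PLRS) (n : ℕ) : ℝ := P.expect n fun l => (l.sum : ℝ)

/-- `Var[K_n]`, the variance of the number of summands on `Ω_n`. -/
noncomputable def varK (P : PLRS) (n : ℕ) : ℝ := varOn (P.Omega n) fun l => (l.sum : ℝ)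

/-- The first index (0-based) at which the coefficient list disagrees with `c`. -/
def firstMismatch (P : PLRS) (l : List ℕ) : Option ℕ :=
  (List.range l.length).find? fun i => l.getD i 0 != P.c (i + 1)

/-- The block decomposition of a legal coefficient sequence: repeatedly split off the
Type 2 block `(c_1, …, c_{s-1}, a_s)` with `a_s ≠ c_s`; if the whole remaining sequence
agrees with `c` it is a single (Type 1) block. -/
def blocks (P : PLRS) (l : List ℕ) : List (List ℕ) :=
  if h : l = [] then []
  else
    match P.firstMismatch l with
    | none => [l]
    | some i => l.take (i + 1) :: P.blocks (l.drop (i + 1))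
termination_by l.length
decreasing_by
  have hl : 0 < l.length := List.length_pos_iff.mpr h
  simp only [List.length_drop]
  omega

/-- The second-to-last block of a legal decomposition. -/
def stlBlock (P : PLRS) (l : List ℕ) : List ℕ := ((P.blocks l).reverse).getD 1 []

/-- `Z_n(ω)`: the size (sum of coefficients) of the second-to-last block. -/
def Z (P : PLRS) (l : List ℕ) : ℕ := (P.stlBlock l).sum

/-- The length function `ℓ(t)`: the length of the Type 2 block of size `t`, i.e., the least
`s` with `t < c_1 + ⋯ + c_s`. -/
noncomputable def ell (P : PLRS) (t : ℕ) : ℕ :=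
  sInf {s : ℕ | t < ∑ i ∈ Finset.Icc 1 s, P.c i}

/-- `L_n(ω) = ℓ(Z_n(ω))`: the length of the second-to-last block. -/
noncomputable def Lfn (P : PLRS) (l : List ℕ) : ℕ := P.ell (P.Z l)

/-- `h_t`: remove the second-to-last block of a legal decomposition. -/
def removeSTL (P : PLRS) (l : List ℕ) : List ℕ :=
  ((((P.blocks l).reverse).eraseIdx 1).reverse).flatten

/-- The Type 2 block of size `t`: `(c_1, …, c_{ℓ(t)-1}, t - (c_1 + ⋯ + c_{ℓ(t)-1}))`. -/
noncomputable def type2Block (P : PLRS) (t : ℕ) : List ℕ :=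
  ((List.range (P.ell t - 1)).map fun i => P.c (i + 1)) ++
    [t - ∑ i ∈ Finset.Icc 1 (P.ell t - 1), P.c i]

/-- Insert the Type 2 block of size `t` immediately before the last block. -/
noncomputable def insertSTL (P : PLRS) (t : ℕ) (l : List ℕ) : List ℕ :=
  ((((P.blocks l).reverse).insertIdx 1 (P.type2Block t)).reverse).flatten

/-- A Type 1 block: `(c_1, …, c_m)` with `1 ≤ m < L`. -/
def IsType1Block (P : PLRS) (bl : List ℕ) : Prop :=
  ∃ m, 1 ≤ m ∧ m < P.L ∧ bl = (List.range m).map fun i => P.c (i + 1)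

/-- A Type 2 block: `(c_1, …, c_{s-1}, a)` with `1 ≤ s ≤ L` and `a < c_s`. -/
def IsType2Block (P : PLRS) (bl : List ℕ) : Prop :=
  ∃ s, 1 ≤ s ∧ s ≤ P.L ∧ ∃ a, a < P.c s ∧
    bl = ((List.range (s - 1)).map fun i => P.c (i + 1)) ++ [a]

/-- Conditional expectation of `g` on `Ω_n` given `Z_n = t`. -/
noncomputable def condExpect (P : PLRS) (n t : ℕ) (g : List ℕ → ℝ) : ℝ :=
  expectOn (P.Omega n ∩ {l | P.Z l = t}) g

end PLRS

open PLRS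

/-!
A legal decomposition is uniquely the concatenation of its blocks: Type 2 blocks followed by one
final block of either type, and `blocks` recovers this list. As `H` is increasing and a legal
decomposition of length `m` has value in `[H m, H (m + 1))`, the set `Ω_n` consists exactly of
the legal decompositions of length `n`. Blocks have length at most `L`, so for `n > 2L` an
element of `S_t` has at least three blocks, and its second-to-last block, a Type 2 block of size
`t`, must be `type2Block t`, of length `ℓ(t)`. Deleting that block and inserting `type2Block t`
before the last block are then inverse operations; both keep the first block, hence the leading
coefficient, and change the length by `ℓ(t)`. On the side of `Ω_{n - ℓ(t)}`, the bound
`n - ℓ(t) > L` provides the two blocks needed.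
-/

namespace PLRS

section

variable (P : PLRS)

lemma sum_Icc_one_eq_sum_range {M : Type*} [AddCommMonoid M] (f : ℕ → M) (k : ℕ) :
    ∑ i ∈ Finset.Icc 1 k, f i = ∑ i ∈ Finset.range k, f (i + 1) := by
  rw [Finset.range_eq_Ico, Finset.sum_Ico_add', zero_add, Finset.Ico_add_one_right_eq_Icc]

lemma sum_le_H_succ {m k : ℕ} (hkm : k ≤ m) (hkL : k ≤ P.L) :
    ∑ i ∈ Finset.range k, P.c (i + 1) * P.H (m - i) ≤ P.H (m + 1) := by
  have key : ∀ j, k ≤ j → ∑ i ∈ Finset.range k, P.c (i + 1) * P.H (m - i) ≤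
      ∑ i ∈ Finset.Icc 1 j, P.c i * P.H (m + 1 - i) := fun j hj => by
    simp only [sum_Icc_one_eq_sum_range, Nat.add_sub_add_right]
    exact Finset.sum_le_sum_of_subset (Finset.range_mono hj)
  rcases lt_or_ge m P.L with hm | hm
  · rcases Nat.eq_zero_or_pos m with rfl | hm1
    · obtain rfl : k = 0 := by omega
      simp
    · rw [P.H_init m hm1 hm]
      exact (key m hkm).trans (Nat.le_succ _)
  · rw [P.H_rec m hm]
    exact key P.L hkL

lemma H_monotoneOn : MonotoneOn P.H (Set.Ici 1) := by
  refine monotoneOn_nat_Ici_of_le_succ fun n hn => ?_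
  have h := P.sum_le_H_succ (m := n) (k := 1) hn P.L_pos
  simp only [Finset.sum_range_one, zero_add, Nat.sub_zero] at h
  exact (Nat.le_mul_of_pos_left _ P.c1_pos).trans h

lemma value_cons (a : ℕ) (l : List ℕ) :
    P.value (a :: l) = a * P.H (l.length + 1) + P.value l := by
  simp only [value, List.length_cons, Finset.sum_range_succ', List.getD_cons_succ,
    List.getD_cons_zero, Nat.sub_zero, Nat.add_sub_add_right]
  ring

lemma value_append (l l' : List ℕ) :
    P.value (l ++ l') =
      ∑ i ∈ Finset.range l.length, l.getD i 0 * P.H (l.length + l'.length - i) +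
        P.value l' := by
  induction l with
  | nil => simp
  | cons a l ih =>
    rw [List.cons_append, value_cons, ih, List.length_cons, Finset.sum_range_succ']
    simp only [List.getD_cons_succ, List.getD_cons_zero, List.length_append]
    rw [show l.length + 1 + l'.length - 0 = l.length + l'.length + 1 by omega]
    simp only [Nat.add_right_comm l.length 1 l'.length, Nat.add_sub_add_right]
    ring

lemma getD_cPrefix {k i : ℕ} (hi : i < k) :
    ((List.range k).map fun j => P.c (j + 1)).getD i 0 = P.c (i + 1) := by
  simp [hi]

lemma value_cPrefix_append (k : ℕ) (l : List ℕ) :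
    P.value (((List.range k).map fun i => P.c (i + 1)) ++ l) =
      ∑ i ∈ Finset.range k, P.c (i + 1) * P.H (k + l.length - i) + P.value l := by
  rw [value_append, List.length_map, List.length_range]
  congr 1
  exact Finset.sum_congr rfl fun i hi => by rw [P.getD_cPrefix (Finset.mem_range.mp hi)]

lemma value_cPrefix_append_lt {s a : ℕ} (hs1 : 1 ≤ s) (hs2 : s ≤ P.L) (ha : a < P.c s)
    {l : List ℕ} (hl : P.value l < P.H (l.length + 1)) :
    P.value (((List.range (s - 1)).map fun i => P.c (i + 1)) ++ a :: l) <
      P.H (s + l.length + 1) := by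
  obtain ⟨s, rfl⟩ : ∃ s', s = s' + 1 := ⟨s - 1, by omega⟩
  rw [value_cPrefix_append, value_cons, Nat.add_sub_cancel]
  have hlast : a * P.H (l.length + 1) + P.H (l.length + 1) ≤ P.c (s + 1) * P.H (l.length + 1) :=
    (Nat.succ_mul _ _).symm.trans_le (Nat.mul_le_mul_right _ ha)
  have hsum := P.sum_le_H_succ (m := s + 1 + l.length) (k := s + 1) (by omega) hs2
  rw [Finset.sum_range_succ, show s + 1 + l.length - s = l.length + 1 by omega] at hsum
  rw [List.length_cons, show s + (l.length + 1) = s + 1 + l.length by omega]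
  omega

lemma value_lt_H_length_succ {l : List ℕ} (h : P.IsLegal l) : P.value l < P.H (l.length + 1) := by
  induction h with
  | cond1 m h1 h2 =>
    have h := P.value_cPrefix_append m []
    simp only [List.append_nil, List.length_nil, add_zero, List.length_map,
      List.length_range] at h ⊢
    rw [h, P.H_init m h1 h2, sum_Icc_one_eq_sum_range]
    simp [value, Nat.add_sub_add_right]
  | cond2 s hs1 hs2 a ha l _ ih =>
    simpa [show s - 1 + (l.length + 1) = s + l.length by omega] using
      P.value_cPrefix_append_lt hs1 hs2 ha ih
  | cond2_last s hs1 hs2 a ha =>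
    simpa [show s - 1 + 1 = s by omega, value, P.H_one] using
      P.value_cPrefix_append_lt hs1 hs2 ha (l := []) (by simp [value, P.H_one])

lemma H_length_le_value {l : List ℕ} (h : P.LegalDecomp l) : P.H l.length ≤ P.value l := by
  obtain ⟨-, hhead⟩ := h
  cases l with
  | nil => simp at hhead
  | cons a l =>
    rw [value_cons, List.length_cons]
    exact (Nat.le_mul_of_pos_left _ hhead).trans (Nat.le_add_right _ _)

lemma IsLegal.ne_nil {l : List ℕ} (h : P.IsLegal l) : l ≠ [] := by
  cases h <;> simp
  omega

/-- Since `H` is increasing, the value of a legal decomposition pins down its length. -/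
lemma mem_Omega_iff {l : List ℕ} {n : ℕ} :
    l ∈ P.Omega n ↔ P.LegalDecomp l ∧ l.length = n := by
  refine ⟨fun ⟨hl, hlo, hhi⟩ => ⟨hl, ?_⟩, fun ⟨hl, hn⟩ => ⟨hl, ?_, ?_⟩⟩
  · have hpos : 1 ≤ l.length := List.length_pos_iff.mpr hl.1.ne_nil
    have h1 := P.H_length_le_value hl
    have h2 := P.value_lt_H_length_succ hl.1
    by_contra hne
    rcases Nat.lt_or_gt_of_ne hne with h | h
    · have := P.H_monotoneOn (by simp : l.length + 1 ∈ Set.Ici 1) (by simp; omega) h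
      omega
    · have := P.H_monotoneOn (by simp : n + 1 ∈ Set.Ici 1) (by simp; omega) h
      omega
  · exact hn ▸ P.H_length_le_value hl
  · exact hn ▸ P.value_lt_H_length_succ hl.1

def IsBlock (b : List ℕ) : Prop := P.IsType1Block b ∨ P.IsType2Block b

end

variable {P : PLRS}

lemma IsBlock.length_le {b : List ℕ} (hb : P.IsBlock b) : b.length ≤ P.L := by
  rcases hb with ⟨m, -, h, rfl⟩ | ⟨s, h1, h, a, -, rfl⟩ <;> simp <;> omega

lemma IsType2Block.isBlock {b : List ℕ} (hb : P.IsType2Block b) : P.IsBlock b := Or.inr hb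

lemma IsType2Block.ne_nil {b : List ℕ} (hb : P.IsType2Block b) : b ≠ [] := by
  obtain ⟨s, -, -, a, -, rfl⟩ := hb
  simp

lemma blocks_nil : P.blocks [] = [] := by
  rw [blocks, dif_pos rfl]

lemma firstMismatch_type1 {b : List ℕ} (hb : P.IsType1Block b) : P.firstMismatch b = none := by
  obtain ⟨m, -, -, rfl⟩ := hb
  refine List.find?_eq_none.mpr fun i hi => ?_
  simpa using P.getD_cPrefix (by simpa using hi)

lemma firstMismatch_type2_append {x : List ℕ} (hx : P.IsType2Block x) (l : List ℕ) :
    P.firstMismatch (x ++ l) = some (x.length - 1) := by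
  obtain ⟨s, hs1, -, a, ha, rfl⟩ := hx
  refine List.find?_range_eq_some.mpr ⟨?_, by simp, fun j hj => ?_⟩
  · simp only [List.length_append, List.length_map, List.length_range, List.length_singleton,
      Nat.add_sub_cancel, List.append_assoc, List.singleton_append]
    rw [List.getD_append_right _ _ _ _ (by simp)]
    simp [show s - 1 + 1 = s by omega, ha.ne]
  · simp only [List.length_append, List.length_map, List.length_range, List.length_singleton,
      Nat.add_sub_cancel] at hj
    rw [List.append_assoc, List.getD_append _ _ _ _ (by simpa using hj), P.getD_cPrefix hj]
    simp

lemma blocks_type2_append {x : List ℕ} (hx : P.IsType2Block x) (l : List ℕ) :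
    P.blocks (x ++ l) = x :: P.blocks l := by
  have hlen : x.length - 1 + 1 = x.length :=
    Nat.sub_add_cancel (List.length_pos_iff.mpr hx.ne_nil)
  rw [blocks, dif_neg (by simp [hx.ne_nil]), firstMismatch_type2_append hx]
  simp only [hlen, List.take_left, List.drop_left]

lemma blocks_of_isBlock {b : List ℕ} (hb : P.IsBlock b) : P.blocks b = [b] := by
  rcases hb with hb | hb
  · have hne : b ≠ [] := by
      obtain ⟨m, h1, -, rfl⟩ := hb
      simp
      omega
    rw [blocks, dif_neg hne, firstMismatch_type1 hb]
  · have h := blocks_type2_append hb []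
    rwa [List.append_nil, blocks_nil] at h

lemma blocks_flatten {C : List (List ℕ)} {b : List ℕ} (hC : ∀ x ∈ C, P.IsType2Block x)
    (hb : P.IsBlock b) : P.blocks (C ++ [b]).flatten = C ++ [b] := by
  induction C with
  | nil => simpa using blocks_of_isBlock hb
  | cons x C ih =>
    rw [List.cons_append, List.flatten_cons, blocks_type2_append (hC x (by simp)),
      ih fun y hy => hC y (by simp [hy])]

lemma isLegal_iff {l : List ℕ} :
    P.IsLegal l ↔
      ∃ C b, (∀ x ∈ C, P.IsType2Block x) ∧ P.IsBlock b ∧ (C ++ [b]).flatten = l := by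
  constructor
  · intro h
    induction h with
    | cond1 m h1 h2 => exact ⟨[], _, by simp, Or.inl ⟨m, h1, h2, rfl⟩, by simp⟩
    | cond2_last s hs1 hs2 a ha =>
      exact ⟨[], _, by simp, Or.inr ⟨s, hs1, hs2, a, ha, rfl⟩, by simp⟩
    | cond2 s hs1 hs2 a ha l _ ih =>
      obtain ⟨C, b, hC, hb, rfl⟩ := ih
      refine ⟨(((List.range (s - 1)).map fun i => P.c (i + 1)) ++ [a]) :: C, b, ?_, hb, by simp⟩
      exact List.forall_mem_cons.mpr ⟨⟨s, hs1, hs2, a, ha, rfl⟩, hC⟩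
  · rintro ⟨C, b, hC, hb, rfl⟩
    induction C with
    | nil =>
      rcases hb with ⟨m, h1, h2, rfl⟩ | ⟨s, h1, h2, a, ha, rfl⟩
      · simpa using IsLegal.cond1 m h1 h2
      · simpa using IsLegal.cond2_last s h1 h2 a ha
    | cons x C ih =>
      obtain ⟨s, h1, h2, a, ha, rfl⟩ := hC x (by simp)
      simpa using IsLegal.cond2 s h1 h2 a ha _ (ih fun y hy => hC y (by simp [hy]))

lemma sum_cPrefix (k : ℕ) :
    ((List.range k).map fun i => P.c (i + 1)).sum = ∑ i ∈ Finset.Icc 1 k, P.c i := by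
  induction k with
  | zero => simp
  | succ k ih => simp [List.range_succ, Finset.sum_Icc_succ_top, ih]

lemma ell_eq {s t : ℕ} (h1 : ∑ i ∈ Finset.Icc 1 (s - 1), P.c i ≤ t)
    (h2 : t < ∑ i ∈ Finset.Icc 1 s, P.c i) : P.ell t = s := by
  cases s with
  | zero => simp at h2
  | succ k =>
    refine (Nat.sInf_upward_closed_eq_succ_iff (fun j₁ j₂ hj h => ?_) k).mpr
      ⟨h2, by simpa using h1⟩
    exact lt_of_lt_of_le (show t < _ from h)
      (Finset.sum_le_sum_of_subset (Finset.Icc_subset_Icc_right hj))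

lemma ell_spec {t : ℕ} (ht : t < P.size) :
    1 ≤ P.ell t ∧ P.ell t ≤ P.L ∧ ∑ i ∈ Finset.Icc 1 (P.ell t - 1), P.c i ≤ t ∧
      t < ∑ i ∈ Finset.Icc 1 (P.ell t), P.c i := by
  have hne : {s | t < ∑ i ∈ Finset.Icc 1 s, P.c i}.Nonempty := ⟨P.L, ht⟩
  have hmem : t < ∑ i ∈ Finset.Icc 1 (P.ell t), P.c i := Nat.sInf_mem hne
  have hpos : 1 ≤ P.ell t := Nat.one_le_iff_ne_zero.mpr fun h0 => by simp [h0] at hmem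
  refine ⟨hpos, Nat.sInf_le ht, ?_, hmem⟩
  by_contra h
  exact Nat.notMem_of_lt_sInf (show P.ell t - 1 < P.ell t by omega) (not_le.mp h)

lemma type2Block_isType2Block {t : ℕ} (ht : t < P.size) : P.IsType2Block (P.type2Block t) := by
  obtain ⟨h1, h2, h3, h4⟩ := ell_spec ht
  refine ⟨P.ell t, h1, h2, _, ?_, rfl⟩
  obtain ⟨s, hs⟩ : ∃ s, P.ell t = s + 1 := ⟨P.ell t - 1, by omega⟩
  rw [hs, Finset.sum_Icc_succ_top (by omega)] at h4
  rw [hs, Nat.add_sub_cancel] at h3 ⊢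
  omega

lemma type2Block_sum {t : ℕ} (ht : t < P.size) : (P.type2Block t).sum = t := by
  obtain ⟨-, -, h3, -⟩ := ell_spec ht
  simp only [type2Block, List.sum_append, sum_cPrefix, List.sum_singleton]
  omega

lemma type2Block_length {t : ℕ} (ht : t < P.size) : (P.type2Block t).length = P.ell t := by
  obtain ⟨h1, -⟩ := ell_spec ht
  simp [type2Block]
  omega

lemma IsType2Block.eq_type2Block_sum {x : List ℕ} (hx : P.IsType2Block x) :
    x = P.type2Block x.sum := by
  obtain ⟨s, h1, -, a, ha, rfl⟩ := hx
  have hsum : (((List.range (s - 1)).map fun i => P.c (i + 1)) ++ [a]).sum =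
      ∑ i ∈ Finset.Icc 1 (s - 1), P.c i + a := by
    rw [List.sum_append, sum_cPrefix, List.sum_singleton]
  have hell : P.ell (∑ i ∈ Finset.Icc 1 (s - 1), P.c i + a) = s := by
    refine ell_eq (Nat.le_add_right _ _) ?_
    obtain ⟨k, rfl⟩ : ∃ k, s = k + 1 := ⟨s - 1, by omega⟩
    rw [Finset.sum_Icc_succ_top (by omega), Nat.add_sub_cancel]
    omega
  simp [type2Block, hsum, hell]

section

variable {C D : List (List ℕ)} {x b : List ℕ}

lemma blocks_flatten_append_pair (hC : ∀ y ∈ C, P.IsType2Block y) (hx : P.IsType2Block x)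
    (hb : P.IsBlock b) : P.blocks (C ++ [x, b]).flatten = C ++ [x, b] := by
  simpa using
    blocks_flatten (C := C ++ [x]) (List.forall_mem_append.mpr ⟨hC, by simpa using hx⟩) hb

lemma removeSTL_flatten (hC : ∀ y ∈ C, P.IsType2Block y) (hx : P.IsType2Block x)
    (hb : P.IsBlock b) : P.removeSTL (C ++ [x, b]).flatten = (C ++ [b]).flatten := by
  rw [removeSTL, blocks_flatten_append_pair hC hx hb]
  simp [List.eraseIdx]

lemma Z_flatten (hC : ∀ y ∈ C, P.IsType2Block y) (hx : P.IsType2Block x) (hb : P.IsBlock b) :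
    P.Z (C ++ [x, b]).flatten = x.sum := by
  rw [Z, stlBlock, blocks_flatten_append_pair hC hx hb]
  simp

lemma insertSTL_flatten (t : ℕ) (hC : ∀ y ∈ C, P.IsType2Block y) (hb : P.IsBlock b) :
    P.insertSTL t (C ++ [b]).flatten = (C ++ [P.type2Block t, b]).flatten := by
  rw [insertSTL, blocks_flatten hC hb]
  simp [List.insertIdx]

/-- The first block, hence the leading coefficient, is untouched. -/
lemma flatten_insert_mem_Omega_iff {n : ℕ} (hD : D ≠ []) (hDT : ∀ y ∈ D, P.IsType2Block y)
    (hx : P.IsType2Block x) (hb : P.IsBlock b) :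
    (D ++ [x, b]).flatten ∈ P.Omega n ↔ (D ++ [b]).flatten ∈ P.Omega (n - x.length) := by
  obtain ⟨d, D, rfl⟩ := List.exists_cons_of_ne_nil hD
  have hd : d ≠ [] := (hDT d (by simp)).ne_nil
  have hleg₁ : P.IsLegal ((d :: D) ++ [x, b]).flatten := isLegal_iff.mpr
    ⟨(d :: D) ++ [x], b, List.forall_mem_append.mpr ⟨hDT, by simpa using hx⟩, hb, by simp⟩
  have hleg₂ : P.IsLegal ((d :: D) ++ [b]).flatten :=
    isLegal_iff.mpr ⟨d :: D, b, hDT, hb, rfl⟩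
  obtain ⟨a, d, rfl⟩ := List.exists_cons_of_ne_nil hd
  simp only [mem_Omega_iff, LegalDecomp, hleg₁, hleg₂, true_and]
  simp
  omega

lemma length_flatten_le {B : List (List ℕ)} (hB : ∀ y ∈ B, P.IsBlock y) :
    B.flatten.length ≤ B.length * P.L := by
  have h := List.sum_le_card_nsmul (B.map List.length) P.L fun m hm => by
    obtain ⟨y, hy, rfl⟩ := List.mem_map.mp hm
    exact (hB y hy).length_le
  simpa [List.length_flatten] using h

lemma exists_blocks_of_mem_Omega {l : List ℕ} {n k : ℕ} (hl : l ∈ P.Omega n)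
    (hk : k * P.L < n) :
    ∃ C b, k ≤ C.length ∧ (∀ y ∈ C, P.IsType2Block y) ∧ P.IsBlock b ∧
      (C ++ [b]).flatten = l := by
  obtain ⟨⟨hleg, -⟩, rfl⟩ := P.mem_Omega_iff.mp hl
  obtain ⟨C, b, hC, hb, rfl⟩ := isLegal_iff.mp hleg
  refine ⟨C, b, ?_, hC, hb, rfl⟩
  have hlen := length_flatten_le (B := C ++ [b])
    (List.forall_mem_append.mpr ⟨fun y hy => (hC y hy).isBlock, by simpa using hb⟩)
  rw [List.length_append, List.length_singleton] at hlen
  by_contra h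
  have := Nat.mul_le_mul_right P.L (show C.length + 1 ≤ k by omega)
  omega

end

section

variable {n t : ℕ}

lemma exists_eq_flatten_of_mem_Omega {l : List ℕ} (hn : P.L < n) (hl : l ∈ P.Omega n) :
    ∃ D b, D ≠ [] ∧ (∀ y ∈ D, P.IsType2Block y) ∧ P.IsBlock b ∧
      l = (D ++ [b]).flatten := by
  obtain ⟨C, b, hC1, hC, hb, rfl⟩ := exists_blocks_of_mem_Omega hl (k := 1) (by simpa using hn)
  exact ⟨C, b, List.ne_nil_of_length_pos hC1, hC, hb, rfl⟩

lemma exists_eq_flatten_of_mem_Omega_inter {l : List ℕ} (hn : 2 * P.L < n)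
    (hl : l ∈ P.Omega n ∩ {l | P.Z l = t}) :
    ∃ D b, D ≠ [] ∧ (∀ y ∈ D, P.IsType2Block y) ∧ P.IsBlock b ∧
      l = (D ++ [P.type2Block t, b]).flatten := by
  obtain ⟨hlΩ, hZ⟩ := hl
  obtain ⟨C, b, hC2, hC, hb, rfl⟩ := exists_blocks_of_mem_Omega hlΩ hn
  obtain ⟨D, x, rfl⟩ : ∃ D x, C = D ++ [x] :=
    (List.eq_nil_or_concat' C).resolve_left (by rintro rfl; simp at hC2)
  have hD : ∀ y ∈ D, P.IsType2Block y := fun y hy => hC y (by simp [hy])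
  have hx : P.IsType2Block x := hC x (by simp)
  rw [List.append_assoc, List.singleton_append] at hZ ⊢
  refine ⟨D, b, ?_, hD, hb, ?_⟩
  · rintro rfl
    simp at hC2
  · rw [hx.eq_type2Block_sum, ← Z_flatten hD hx hb, hZ]

lemma mapsTo_removeSTL (hn : 2 * P.L < n) (ht : t < P.size) :
    Set.MapsTo P.removeSTL (P.Omega n ∩ {l | P.Z l = t}) (P.Omega (n - P.ell t)) := by
  intro l hl
  obtain ⟨D, b, hD, hDT, hb, rfl⟩ := exists_eq_flatten_of_mem_Omega_inter hn hl
  have hx := type2Block_isType2Block ht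
  rw [removeSTL_flatten hDT hx hb, ← type2Block_length ht,
    ← flatten_insert_mem_Omega_iff hD hDT hx hb]
  exact hl.1

lemma mapsTo_insertSTL (hn : 2 * P.L < n) (ht : t < P.size) :
    Set.MapsTo (P.insertSTL t) (P.Omega (n - P.ell t)) (P.Omega n ∩ {l | P.Z l = t}) := by
  intro l hl
  obtain ⟨-, hℓ, -⟩ := ell_spec ht
  obtain ⟨D, b, hD, hDT, hb, rfl⟩ := exists_eq_flatten_of_mem_Omega (by omega) hl
  have hx := type2Block_isType2Block ht
  rw [insertSTL_flatten t hDT hb]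
  refine ⟨(flatten_insert_mem_Omega_iff hD hDT hx hb).mpr ?_, ?_⟩
  · rwa [type2Block_length ht]
  · exact (Z_flatten hDT hx hb).trans (type2Block_sum ht)

lemma invOn_insertSTL_removeSTL (hn : 2 * P.L < n) (ht : t < P.size) :
    Set.InvOn (P.insertSTL t) P.removeSTL (P.Omega n ∩ {l | P.Z l = t})
      (P.Omega (n - P.ell t)) := by
  have hx := type2Block_isType2Block ht
  constructor
  · intro l hl
    obtain ⟨D, b, -, hDT, hb, rfl⟩ := exists_eq_flatten_of_mem_Omega_inter hn hl
    rw [removeSTL_flatten hDT hx hb, insertSTL_flatten t hDT hb]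
  · intro l hl
    obtain ⟨-, hℓ, -⟩ := ell_spec ht
    obtain ⟨D, b, -, hDT, hb, rfl⟩ := exists_eq_flatten_of_mem_Omega (by omega) hl
    rw [insertSTL_flatten t hDT hb, removeSTL_flatten hDT hx hb]

end

end PLRS

/-- For `n > 2L` and `0 ≤ t < S`, removing the second-to-last block maps
`S_t = {ω ∈ Ω_n : Z_n ω = t}` into `Ω_{n - ℓ(t)}`, and is a bijection between them. -/
theorem removeSTL_bijOn (P : PLRS) (n t : ℕ) (hn : 2 * P.L < n) (ht : t < P.size) :
    (∀ l ∈ P.Omega n ∩ {l | P.Z l = t}, P.removeSTL l ∈ P.Omega (n - P.ell t)) ∧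
    Set.BijOn P.removeSTL (P.Omega n ∩ {l | P.Z l = t}) (P.Omega (n - P.ell t)) :=
  ⟨mapsTo_removeSTL hn ht,
    (invOn_insertSTL_removeSTL hn ht).bijOn (mapsTo_removeSTL hn ht) (mapsTo_insertSTL hn ht)⟩
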